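/- Let W be a finite-dimensional complex vector space, q a real number with q > 1, and f ∈ GL(W) a diagonalizable linear automorphism whose distinct eigenvalues are exactly q^{e_1}, …, q^{e_r}, where e_1, …, e_r are real numbers with e_{i+1} = e_i + 1 for i = 1, …, r−1. Let E_i ⊆ W be the eigenspace of f for the eigenvalue q^{e_i}. Then the set V_f = { x ∈ End_ℂ(W) : f ∘ x ∘ f^{-1} = q • x } consists exactly of those endomorphisms x satisfying x(E_i) ⊆ E_{i+1} for i = 1, …, r−1 and x(E_r) = 0, and the map x ↦ (x|_{E_i} : E_i → E_{i+1})_{i=1}^{r-1} is a ℂ-linear isomorphism from V_f onto ∏_{i=1}^{r-1} Hom_ℂ(E_i, E_{i+1}). Likewise, the set V_f^- = { y ∈ End_ℂ(W) : f ∘ y ∘ f^{-1} = q^{-1} • y } is mapped ℂ-linearly isomorphically onto ∏_{i=1}^{r-1} Hom_ℂ(E_{i+1}, E_i) by y ↦ (y|_{E_{i+1}})_{i=1}^{r-1}. -/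

import Mathlib

open LinearMap
open scoped DirectSum

variable {W : Type} [AddCommGroup W] [Module ℂ W]

private lemma eq_on_iSup {ι : Type} {p : ι → Submodule ℂ W}
    (hsup : ⨆ i, p i = ⊤) {g h : W →ₗ[ℂ] W}
    (H : ∀ i, ∀ w ∈ p i, g w = h w) : g = h := by
  ext w
  have hw : w ∈ ⨆ i, p i := hsup ▸ Submodule.mem_top
  refine Submodule.iSup_induction (motive := fun w => g w = h w) p hw H (by simp) ?_
  intro a b ha hb
  simp [map_add, ha, hb]

private lemma apply_mem_eigenspace {f : W ≃ₗ[ℂ] W} {c μ : ℂ} {x : W →ₗ[ℂ] W}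
    (hx : f.toLinearMap ∘ₗ x ∘ₗ f.symm.toLinearMap = c • x)
    {w : W} (hw : w ∈ Module.End.eigenspace f.toLinearMap μ) :
    x w ∈ Module.End.eigenspace f.toLinearMap (c * μ) := by
  rw [Module.End.mem_eigenspace_iff] at hw ⊢
  have h1 := LinearMap.congr_fun hx (f.toLinearMap w)
  simp only [coe_comp, Function.comp_apply, LinearMap.smul_apply, LinearEquiv.coe_coe,
    LinearEquiv.symm_apply_apply] at h1
  have hw' : f w = μ • w := hw
  rw [hw', map_smul, smul_smul] at h1
  exact h1

private lemma conj_eq_smul {ι : Type} {f : W ≃ₗ[ℂ] W} {c : ℂ} {μ : ι → ℂ}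
    {E : ι → Submodule ℂ W} (hμ0 : ∀ i, μ i ≠ 0)
    (hE : ∀ i, E i = Module.End.eigenspace f.toLinearMap (μ i))
    (hsup : ⨆ i, E i = ⊤) {x : W →ₗ[ℂ] W}
    (H : ∀ i, ∀ w ∈ E i, f.toLinearMap (x w) = (c * μ i) • x w) :
    f.toLinearMap ∘ₗ x ∘ₗ f.symm.toLinearMap = c • x := by
  refine eq_on_iSup hsup ?_
  intro i w hw
  have hfw : f.toLinearMap w = μ i • w := by
    rw [hE i, Module.End.mem_eigenspace_iff] at hw; exact hw
  have hsymm : f.symm.toLinearMap w = (μ i)⁻¹ • w := by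
    apply f.injective
    have : (f : W →ₗ[ℂ] W) (f.symm.toLinearMap w) = w := by simp
    rw [show f ((μ i)⁻¹ • w) = (μ i)⁻¹ • f.toLinearMap w from map_smul f _ w]
    rw [hfw, smul_smul, inv_mul_cancel₀ (hμ0 i), one_smul]
    simpa using this
  simp only [coe_comp, Function.comp_apply, LinearMap.smul_apply]
  rw [hsymm, map_smul, map_smul, H i w hw, smul_smul, mul_comm c,
    inv_mul_cancel_left₀ (hμ0 i)]


/-- The space `V_f^{(c)} = { x ∈ End_ℂ(W) : f ∘ x ∘ f⁻¹ = c • x }`, a ℂ-subspace of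
`End_ℂ(W)`.  For `c = q` this is the Vogan variety `V_f`, for `c = q⁻¹` its dual
`V_f^-`. -/
def conjWt (f : W ≃ₗ[ℂ] W) (c : ℂ) : Submodule ℂ (W →ₗ[ℂ] W) where
  carrier := {x | f.toLinearMap ∘ₗ x ∘ₗ f.symm.toLinearMap = c • x}
  add_mem' := by
    intro a b ha hb
    simp only [Set.mem_setOf_eq] at *
    rw [add_comp, comp_add, ha, hb, smul_add]
  zero_mem' := by
    simp only [Set.mem_setOf_eq, comp_zero, zero_comp, smul_zero]
  smul_mem' := by
    intro t a ha
    simp only [Set.mem_setOf_eq] at *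
    rw [smul_comp, comp_smul, ha, smul_comm]

private lemma mainLemma {n : ℕ} (f : W ≃ₗ[ℂ] W) (c : ℂ)
    (μ : Fin (n + 1) → ℂ) (hμ0 : ∀ i, μ i ≠ 0) (hμinj : Function.Injective μ)
    (E : Fin (n + 1) → Submodule ℂ W)
    (hE : ∀ i, E i = Module.End.eigenspace f.toLinearMap (μ i))
    (hsup : ⨆ i, E i = ⊤)
    (π σ : Fin n → Fin (n + 1)) (k : Fin (n + 1))
    (hbij : Function.Bijective (fun o : Option (Fin n) => o.elim k π))
    (hcm : ∀ j, c * μ (π j) = μ (σ j))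
    (hk : Module.End.eigenspace f.toLinearMap (c * μ k) = ⊥) :
    (∀ x : W →ₗ[ℂ] W,
      f.toLinearMap ∘ₗ x ∘ₗ f.symm.toLinearMap = c • x ↔
        ((∀ j, ∀ w ∈ E (π j), x w ∈ E (σ j)) ∧ ∀ w ∈ E k, x w = 0)) ∧
    ∃ Φ : conjWt f c ≃ₗ[ℂ] (∀ j : Fin n, E (π j) →ₗ[ℂ] E (σ j)),
      ∀ (x : conjWt f c) (j : Fin n) (w : E (π j)), (Φ x j w : W) = x.1 w := by
  -- the characterization
  have hchar : ∀ x : W →ₗ[ℂ] W,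
      f.toLinearMap ∘ₗ x ∘ₗ f.symm.toLinearMap = c • x ↔
        ((∀ j, ∀ w ∈ E (π j), x w ∈ E (σ j)) ∧ ∀ w ∈ E k, x w = 0) := by
    intro x
    constructor
    · intro hx
      constructor
      · intro j w hw
        rw [hE (π j)] at hw
        rw [hE (σ j), ← hcm j]
        exact apply_mem_eigenspace hx hw
      · intro w hw
        rw [hE k] at hw
        have := apply_mem_eigenspace hx (μ := μ k) (c := c) hw
        rw [hk, Submodule.mem_bot] at this
        exact this
    · rintro ⟨h1, h2⟩
      refine conj_eq_smul hμ0 hE hsup ?_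
      intro i w hw
      obtain ⟨o, rfl⟩ := hbij.2 i
      cases o with
      | none => simp [h2 w hw]
      | some j =>
        have := h1 j w hw
        rw [hE (σ j), Module.End.mem_eigenspace_iff] at this
        rw [this]
        show μ (σ j) • x w = (c * μ (π j)) • x w
        rw [hcm j]
  refine ⟨hchar, ?_⟩
  -- internal direct sum indexed by `Option (Fin n)`
  have hFsup : ⨆ o : Option (Fin n), E (o.elim k π) = ⊤ := by
    rw [← hsup]
    exact hbij.2.iSup_comp E
  have hFind : iSupIndep (fun o : Option (Fin n) => E (o.elim k π)) := by
    have h1 := Module.End.eigenspaces_iSupIndep f.toLinearMap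
    have h2 := h1.comp (f := fun o : Option (Fin n) => μ (o.elim k π))
      (hμinj.comp hbij.1)
    convert h2 using 1
    funext o
    exact hE _
  have hInt : DirectSum.IsInternal (fun o : Option (Fin n) => E (o.elim k π)) :=
    (DirectSum.isInternal_submodule_iff_iSupIndep_and_iSup_eq_top _).mpr ⟨hFind, hFsup⟩
  let D : (⨁ o : Option (Fin n), E (o.elim k π)) ≃ₗ[ℂ] W :=
    LinearEquiv.ofBijective (DirectSum.coeLinearMap _) hInt
  have hD : ∀ (o : Option (Fin n)) (w : W) (hw : w ∈ E (o.elim k π)),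
      D.symm w = DirectSum.of (fun o : Option (Fin n) => E (o.elim k π)) o ⟨w, hw⟩ := by
    intro o w hw
    rw [LinearEquiv.symm_apply_eq]
    show w = DirectSum.coeLinearMap (fun o : Option (Fin n) => E (o.elim k π))
      (DirectSum.of (fun o : Option (Fin n) => (E (o.elim k π) : Submodule ℂ W)) o ⟨w, hw⟩)
    rw [DirectSum.coeLinearMap_of]
  -- construction of the inverse map
  let g : (∀ j : Fin n, E (π j) →ₗ[ℂ] E (σ j)) →
      ∀ o : Option (Fin n), E (o.elim k π) →ₗ[ℂ] W :=
    fun φ o => Option.rec 0 (fun j => (E (σ j)).subtype ∘ₗ φ j) o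
  let xof : (∀ j : Fin n, E (π j) →ₗ[ℂ] E (σ j)) → (W →ₗ[ℂ] W) :=
    fun φ => (DirectSum.toModule ℂ (Option (Fin n)) W (g φ)) ∘ₗ D.symm.toLinearMap
  have hxof : ∀ φ (o : Option (Fin n)) (w : W) (hw : w ∈ E (o.elim k π)),
      xof φ w = g φ o ⟨w, hw⟩ := by
    intro φ o w hw
    show DirectSum.toModule ℂ _ W (g φ) (D.symm w) = _
    rw [hD o w hw, ← DirectSum.lof_eq_of ℂ, DirectSum.toModule_lof]
  have hx1 : ∀ φ (j : Fin n) (w : W) (hw : w ∈ E (π j)),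
      xof φ w = (φ j ⟨w, hw⟩ : W) := fun φ j w hw => hxof φ (some j) w hw
  have hx2 : ∀ φ, ∀ w ∈ E k, xof φ w = 0 := fun φ w hw => hxof φ none w hw
  have hmem : ∀ φ, xof φ ∈ conjWt f c := by
    intro φ
    show f.toLinearMap ∘ₗ xof φ ∘ₗ f.symm.toLinearMap = c • xof φ
    rw [hchar]
    refine ⟨fun j w hw => ?_, hx2 φ⟩
    rw [hx1 φ j w hw]
    exact (φ j ⟨w, hw⟩).2
  have hres : ∀ (x : conjWt f c) (j : Fin n), ∀ w ∈ E (π j), x.1 w ∈ E (σ j) :=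
    fun x j => ((hchar x.1).mp x.2).1 j
  refine ⟨{ toFun := fun x j => (x.1).restrict (hres x j)
            map_add' := ?_
            map_smul' := ?_
            invFun := fun φ => ⟨xof φ, hmem φ⟩
            left_inv := ?_
            right_inv := ?_ }, ?_⟩
  · intro x y
    funext j
    ext w
    simp [LinearMap.restrict_apply]
  · intro t x
    funext j
    ext w
    simp [LinearMap.restrict_apply]
  · intro x
    apply Subtype.ext
    refine eq_on_iSup hFsup ?_
    intro o w hw
    cases o with
    | none => rw [hx2 _ w hw, ((hchar x.1).mp x.2).2 w hw]
    | some j =>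
      rw [hx1 _ j w hw]
      simp [LinearMap.restrict_apply]
  · intro φ
    funext j
    ext w
    show (xof φ w : W) = (φ j w : W)
    rw [hx1 φ j w w.2]
  · intro x j w
    rfl

/-- Let `W` be a finite-dimensional complex vector space, `q > 1` real,
and `f ∈ GL(W)` diagonalizable with distinct eigenvalues exactly
`q^{e_1}, …, q^{e_r}` where `e_{i+1} = e_i + 1`, and let `E_i` be the `q^{e_i}`-eigenspace.
Then `V_f = {x : f x f⁻¹ = q • x}` consists exactly of the `x` with `x(E_i) ⊆ E_{i+1}` and
`x(E_r) = 0`, and restriction gives a ℂ-linear isomorphism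
`V_f ≅ ∏ Hom(E_i, E_{i+1})`; likewise `V_f^- = {y : f y f⁻¹ = q⁻¹ • y}` is mapped
ℂ-linearly isomorphically onto `∏ Hom(E_{i+1}, E_i)` by restriction. -/
theorem stmt_0 (n : ℕ) [FiniteDimensional ℂ W] (q : ℝ) (hq : 1 < q)
    (e : Fin (n + 1) → ℝ) (he : ∀ i : Fin n, e i.succ = e i.castSucc + 1)
    (f : W ≃ₗ[ℂ] W)
    (hdiag : (⨆ μ : ℂ, Module.End.eigenspace (f : W →ₗ[ℂ] W) μ) = ⊤)
    (heig : ∀ μ : ℂ, Module.End.HasEigenvalue (f : W →ₗ[ℂ] W) μ ↔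
      ∃ i : Fin (n + 1), μ = ((q ^ e i : ℝ) : ℂ))
    (E : Fin (n + 1) → Submodule ℂ W)
    (hE : ∀ i, E i = Module.End.eigenspace (f : W →ₗ[ℂ] W) ((q ^ e i : ℝ) : ℂ)) :
    (∀ x : W →ₗ[ℂ] W,
      f.toLinearMap ∘ₗ x ∘ₗ f.symm.toLinearMap = (q : ℂ) • x ↔
        ((∀ i : Fin n, ∀ w ∈ E i.castSucc, x w ∈ E i.succ) ∧
          ∀ w ∈ E (Fin.last n), x w = 0)) ∧
    (∃ Φ : conjWt f (q : ℂ) ≃ₗ[ℂ] (∀ i : Fin n, E i.castSucc →ₗ[ℂ] E i.succ),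
      ∀ (x : conjWt f (q : ℂ)) (i : Fin n) (w : E i.castSucc),
        (Φ x i w : W) = x.1 w) ∧
    (∃ Ψ : conjWt f ((q : ℂ))⁻¹ ≃ₗ[ℂ] (∀ i : Fin n, E i.succ →ₗ[ℂ] E i.castSucc),
      ∀ (y : conjWt f ((q : ℂ))⁻¹) (i : Fin n) (w : E i.succ),
        (Ψ y i w : W) = y.1 w) := by
  have hq0 : (0 : ℝ) < q := lt_trans one_pos hq
  set μ : Fin (n + 1) → ℂ := fun i => ((q ^ e i : ℝ) : ℂ) with hμdef
  have hrpos : ∀ y : ℝ, (0 : ℝ) < q ^ y := fun y => Real.rpow_pos_of_pos hq0 y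
  have hμ0 : ∀ i, μ i ≠ 0 := by
    intro i
    simp only [hμdef, ne_eq, Complex.ofReal_eq_zero]
    exact (hrpos (e i)).ne'
  have hsm : StrictMono (fun y : ℝ => q ^ y) :=
    fun a b h => (Real.rpow_lt_rpow_left_iff hq).2 h
  have hemono : StrictMono e := by
    rw [Fin.strictMono_iff_lt_succ]
    intro i
    rw [he i]
    linarith
  have hμinj : Function.Injective μ := by
    intro a b hab
    have h1 : q ^ e a = q ^ e b := by
      simp only [hμdef] at hab
      exact_mod_cast hab
    exact hemono.injective (hsm.injective h1)
  have hsup : ⨆ i, E i = ⊤ := by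
    rw [← top_le_iff, ← hdiag]
    refine iSup_le fun ν => ?_
    by_cases hν : Module.End.HasEigenvalue (f : W →ₗ[ℂ] W) ν
    · obtain ⟨i, rfl⟩ := (heig ν).mp hν
      exact le_iSup_of_le i (le_of_eq (hE i).symm)
    · rw [Module.End.hasEigenvalue_iff, not_ne_iff] at hν
      rw [hν]
      exact bot_le
  have hnot : ∀ ν : ℂ, (∀ i, ν ≠ μ i) →
      Module.End.eigenspace (f : W →ₗ[ℂ] W) ν = ⊥ := by
    intro ν hν
    by_contra h
    obtain ⟨i, hi⟩ := (heig ν).mp (Module.End.hasEigenvalue_iff.mpr h)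
    exact hν i hi
  have hmul : ∀ j : Fin (n + 1), (q : ℂ) * μ j = ((q ^ (e j + 1) : ℝ) : ℂ) := by
    intro j
    rw [Real.rpow_add_one hq0.ne', Complex.ofReal_mul]
    ring
  have hcm1 : ∀ j : Fin n, (q : ℂ) * μ j.castSucc = μ j.succ := by
    intro j
    rw [hmul, hμdef]
    norm_num [he j]
  have hk1 : Module.End.eigenspace (f : W →ₗ[ℂ] W) ((q : ℂ) * μ (Fin.last n)) = ⊥ := by
    refine hnot _ ?_
    intro i hi
    rw [hmul] at hi
    have h1 : q ^ (e (Fin.last n) + 1) = q ^ e i := by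
      simp only [hμdef] at hi
      exact_mod_cast hi
    have h2 := hsm.injective h1
    have h3 : e i ≤ e (Fin.last n) := hemono.monotone (Fin.le_last i)
    linarith
  have hcm2 : ∀ j : Fin n, ((q : ℂ))⁻¹ * μ j.succ = μ j.castSucc := by
    intro j
    rw [← hcm1 j, inv_mul_cancel_left₀]
    exact_mod_cast hq0.ne'
  have hk2 : Module.End.eigenspace (f : W →ₗ[ℂ] W) (((q : ℂ))⁻¹ * μ 0) = ⊥ := by
    refine hnot _ ?_
    intro i hi
    have key : ((q : ℂ))⁻¹ * μ 0 = ((q ^ (e 0 - 1) : ℝ) : ℂ) := by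
      rw [Real.rpow_sub hq0, Real.rpow_one, hμdef]
      push_cast
      field_simp
    rw [key] at hi
    have h1 : q ^ (e 0 - 1) = q ^ e i := by
      simp only [hμdef] at hi
      exact_mod_cast hi
    have h2 := hsm.injective h1
    have h3 : e 0 ≤ e i := hemono.monotone (Fin.zero_le i)
    linarith
  have hbij1 : Function.Bijective
      (fun o : Option (Fin n) => o.elim (Fin.last n) Fin.castSucc) := by
    constructor
    · intro a b hab
      cases a with
      | none => cases b with
        | none => rfl
        | some j => exact absurd hab.symm (Fin.castSucc_lt_last j).ne
      | some i => cases b with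
        | none => exact absurd hab (Fin.castSucc_lt_last i).ne
        | some j => exact congrArg some (Fin.castSucc_injective n hab)
    · intro i
      refine Fin.lastCases ?_ ?_ i
      · exact ⟨none, rfl⟩
      · exact fun j => ⟨some j, rfl⟩
  have hbij2 : Function.Bijective
      (fun o : Option (Fin n) => o.elim 0 Fin.succ) := by
    constructor
    · intro a b hab
      cases a with
      | none => cases b with
        | none => rfl
        | some j => exact absurd hab.symm (Fin.succ_ne_zero j)
      | some i => cases b with
        | none => exact absurd hab (Fin.succ_ne_zero i)
        | some j => exact congrArg some (Fin.succ_injective n hab)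
    · intro i
      refine Fin.cases ?_ ?_ i
      · exact ⟨none, rfl⟩
      · exact fun j => ⟨some j, rfl⟩
  obtain ⟨h1, h2⟩ := mainLemma f (q : ℂ) μ hμ0 hμinj E hE hsup
    Fin.castSucc Fin.succ (Fin.last n) hbij1 hcm1 hk1
  obtain ⟨-, h3⟩ := mainLemma f ((q : ℂ))⁻¹ μ hμ0 hμinj E hE hsup
    Fin.succ Fin.castSucc 0 hbij2 hcm2 hk2
  exact ⟨h1, h2, h3⟩
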